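/- arXiv:1701.01478 — 3 statements merged into one kernel-verified Lean document; each statement's English description precedes it below -/
import Mathlib

section
/- Let A, B be convex subsets of a Banach space X, r ≠ s reals, ψ as above, K > 0, and φ_K = (−K‖·‖) * ψ the sup-convolution. Let x̄ ∈ X and suppose there exists c > 0 such that the sets U = {z ∈ [A,B] : ψ(z) − K‖z − x̄‖ > φ_K(x̄) − c} and V = {z ∈ [A,B] : |s − ψ(z)| < c} are disjoint. If p is a superdifferential of φ_K at x̄ (p(h) ≥ φ_K(x̄+h) − φ_K(x̄) for all h), then inf_B p − inf_A p ≥ s − r. -/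
/-!
Take `z` with `ψ z - K‖x̄ - z‖` within `ε` of `φ_K(x̄)` and write `z = l a + (1 - l) b₀` with
`a ∈ A`, `b₀ ∈ B` and `ψ z ≈ m := l r + (1 - l) s` up to `ε`. Testing the superdifferential
with `h = b - z` (translate the near-maximiser `z` to `b ∈ B`, where `ψ ≥ s`) gives
`p (b - z) ≥ s - m - ε = l (s - r) - ε` for all `b ∈ B`; with `b = b₀` this controls
`p (b₀ - a)`, and adding up yields `p b - p a ≥ (s - r) - ε / l`. The near-maximiser lies in `U`,
hence not in `V`, so `|m - s| = l |s - r| ≳ c` keeps `l` away from `0`; let `ε → 0`.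
-/

open Set Filter Topology

theorem mem_convexHull_prod_Iic_union_iff {E : Type*} [AddCommGroup E] [Module ℝ E]
    {A B : Set E} (hA : Convex ℝ A) (hB : Convex ℝ B) (hAne : A.Nonempty) (hBne : B.Nonempty)
    {r s t : ℝ} {z : E} :
    (z, t) ∈ convexHull ℝ (A ×ˢ Iic r ∪ B ×ˢ Iic s) ↔
      ∃ a ∈ A, ∃ b ∈ B, ∃ l ∈ Icc (0 : ℝ) 1,
        z = l • a + (1 - l) • b ∧ t ≤ l * r + (1 - l) * s := by
  rw [(hA.prod (convex_Iic r)).convexHull_union (hB.prod (convex_Iic s))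
    (hAne.prod nonempty_Iic) (hBne.prod nonempty_Iic), mem_convexJoin]
  constructor
  · rintro ⟨⟨a, r'⟩, ⟨ha, hr'⟩, ⟨b, s'⟩, ⟨hb, hs'⟩, l, l', hl, hl', hll', heq⟩
    obtain rfl : l' = 1 - l := by linarith
    simp only [Prod.ext_iff, Prod.fst_add, Prod.snd_add, Prod.smul_fst, Prod.smul_snd,
      smul_eq_mul] at heq
    refine ⟨a, ha, b, hb, l, ⟨hl, by linarith⟩, heq.1.symm, heq.2 ▸ ?_⟩
    have : r' ≤ r := hr'
    have : s' ≤ s := hs'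
    gcongr
  · rintro ⟨a, ha, b, hb, l, ⟨hl, hl1⟩, rfl, ht⟩
    -- lower both heights by the same amount `d`; the weights sum to `1`
    set d := l * r + (1 - l) * s - t
    refine ⟨(a, r - d), ⟨ha, ?_⟩, (b, s - d), ⟨hb, ?_⟩, l, 1 - l, hl, by linarith, by ring, ?_⟩
    · exact mem_Iic.2 (by linarith)
    · exact mem_Iic.2 (by linarith)
    · ext
      · simp
      · simp only [Prod.snd_add, Prod.smul_snd, smul_eq_mul, d]; ring

theorem le_coe_add_of_coe_eq_iSup_sub {ι : Type*} {f : ι → EReal} {g : ι → ℝ} {a : ℝ}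
    (ha : (a : EReal) = ⨆ i, f i - g i) (i : ι) : f i ≤ ↑(a + g i) := by
  rw [EReal.coe_add, ← EReal.sub_le_iff_le_add (.inl (EReal.coe_ne_bot _))
    (.inl (EReal.coe_ne_top _)), ha]
  exact le_iSup (fun i => f i - g i) i

theorem exists_coe_add_lt_of_coe_eq_iSup_sub {ι : Type*} {f : ι → EReal} {g : ι → ℝ} {a : ℝ}
    (ha : (a : EReal) = ⨆ i, f i - g i) {ε : ℝ} (hε : 0 < ε) : ∃ i, ↑(a - ε + g i) < f i := by
  have : ((a - ε : ℝ) : EReal) < ⨆ i, f i - g i := ha ▸ EReal.coe_lt_coe_iff.2 (sub_lt_self a hε)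
  obtain ⟨i, hi⟩ := lt_iSup_iff.1 this
  exact ⟨i, by rw [EReal.coe_add]; exact EReal.add_lt_of_lt_sub hi⟩

theorem sub_div_le_apply_sub_apply_of_le_apply_sub {E : Type*} [AddCommGroup E] [Module ℝ E]
    (p : E →ₗ[ℝ] ℝ) {a b₀ b : E} {l d ε : ℝ} (hl : 0 < l) (hl1 : l ≤ 1)
    (hb₀ : l * d - ε ≤ p (b₀ - (l • a + (1 - l) • b₀)))
    (hb : l * d - ε ≤ p (b - (l • a + (1 - l) • b₀))) :
    d - ε / l ≤ p b - p a := by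
  have hb₀a : p (b₀ - (l • a + (1 - l) • b₀)) = l * p (b₀ - a) := by
    rw [← smul_eq_mul, ← map_smul]; congr 1; module
  have hsplit : p b - p a = p (b - (l • a + (1 - l) • b₀)) + (1 - l) * p (b₀ - a) := by
    rw [← smul_eq_mul, ← map_smul, ← map_add, ← map_sub]; congr 1; module
  have hq : d - ε / l ≤ p (b₀ - a) := by
    rw [sub_le_comm, le_div_iff₀ hl]; linarith
  rw [hsplit]
  calc d - ε / l = l * d - ε + (1 - l) * (d - ε / l) := by field_simp; ring
    _ ≤ _ := by gcongr

section SupConvolution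

variable {X : Type*} [NormedAddCommGroup X] [NormedSpace ℝ X] {A B : Set X} {r s : ℝ}
  {ψ : X → EReal} {K : ℝ} {φ : X → ℝ}

theorem coe_le_iff_exists_of_hypograph_eq (hA : Convex ℝ A) (hB : Convex ℝ B)
    (hAne : A.Nonempty) (hBne : B.Nonempty)
    (hψ : {q : X × ℝ | (q.2 : EReal) ≤ ψ q.1} = convexHull ℝ ((A ×ˢ Iic r) ∪ (B ×ˢ Iic s)))
    (z : X) (t : ℝ) :
    (t : EReal) ≤ ψ z ↔ ∃ a ∈ A, ∃ b ∈ B, ∃ l ∈ Icc (0 : ℝ) 1,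
      z = l • a + (1 - l) • b ∧ t ≤ l * r + (1 - l) * s := by
  rw [← mem_convexHull_prod_Iic_union_iff hA hB hAne hBne, ← hψ]
  rfl

theorem exists_mem_forall_sub_le_apply_sub_apply (hA : Convex ℝ A) (hB : Convex ℝ B)
    (hAne : A.Nonempty) (hBne : B.Nonempty)
    (hψ : {q : X × ℝ | (q.2 : EReal) ≤ ψ q.1} = convexHull ℝ ((A ×ˢ Iic r) ∪ (B ×ˢ Iic s)))
    (hφ : ∀ x, (φ x : EReal) = ⨆ y : X, ψ y - ((K * ‖x - y‖ : ℝ) : EReal))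
    {xbar : X} {c : ℝ}
    (hUV : Disjoint
      {z ∈ convexHull ℝ (A ∪ B) | ((φ xbar - c : ℝ) : EReal) < ψ z - ((K * ‖z - xbar‖ : ℝ) : EReal)}
      {z ∈ convexHull ℝ (A ∪ B) | ((s - c : ℝ) : EReal) < ψ z ∧ ψ z < ((s + c : ℝ) : EReal)})
    {p : X →L[ℝ] ℝ} (hp : ∀ h : X, φ (xbar + h) - φ xbar ≤ p h)
    {ε : ℝ} (hε : 0 < ε) (hεc : ε < c) :
    ∃ a ∈ A, ∀ b ∈ B, s - r - ε * |s - r| / (c - ε) ≤ p b - p a := by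
  have hψ' := coe_le_iff_exists_of_hypograph_eq hA hB hAne hBne hψ
  have hψφ (x y : X) : ψ y ≤ ↑(φ x + K * ‖x - y‖) :=
    le_coe_add_of_coe_eq_iSup_sub (g := fun y => K * ‖x - y‖) (hφ x) y
  have hsB (b : X) (hb : b ∈ B) : (s : EReal) ≤ ψ b :=
    (hψ' b s).2 ⟨_, hAne.some_mem, b, hb, 0, ⟨le_rfl, zero_le_one⟩, by simp, by simp⟩
  obtain ⟨z, hz⟩ := exists_coe_add_lt_of_coe_eq_iSup_sub (g := fun y => K * ‖xbar - y‖)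
    (hφ xbar) hε
  obtain ⟨a, ha, b₀, hb₀, l, ⟨hl0, hl1⟩, rfl, htm⟩ := (hψ' _ _).1 hz.le
  set z := l • a + (1 - l) • b₀
  set m := l * r + (1 - l) * s
  have hmz : (m : EReal) ≤ ψ z := (hψ' z m).2 ⟨a, ha, b₀, hb₀, l, ⟨hl0, hl1⟩, rfl, le_rfl⟩
  have hzC : z ∈ convexHull ℝ (A ∪ B) :=
    segment_subset_convexHull (mem_union_left B ha) (mem_union_right A hb₀)
      ⟨l, 1 - l, hl0, by linarith, by ring, rfl⟩
  have hzU : ((φ xbar - c : ℝ) : EReal) < ψ z - ((K * ‖z - xbar‖ : ℝ) : EReal) := by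
    rw [EReal.lt_sub_iff_add_lt (.inl (EReal.coe_ne_bot _)) (.inl (EReal.coe_ne_top _)),
      ← EReal.coe_add, norm_sub_rev]
    exact lt_trans (EReal.coe_lt_coe_iff.2 (by linarith)) hz
  have hzV : m ≤ s - c ∨ s + c ≤ m + ε := by
    by_contra! h
    refine disjoint_left.1 hUV ⟨hzC, hzU⟩ ⟨hzC, ?_, ?_⟩
    · exact (EReal.coe_lt_coe_iff.2 h.1).trans_le hmz
    · exact (hψφ xbar z).trans_lt (EReal.coe_lt_coe_iff.2 (by linarith))
  have hl : c - ε ≤ l * |s - r| := by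
    rcases hzV with h | h <;> nlinarith [le_abs_self (s - r), neg_abs_le (s - r)]
  have hlpos : 0 < l := by
    by_contra! h
    nlinarith [abs_nonneg (s - r)]
  have hpB (b : X) (hb : b ∈ B) : l * (s - r) - ε ≤ p (b - z) := by
    have h := (hsB b hb).trans (hψφ (xbar + (b - z)) b)
    rw [EReal.coe_le_coe_iff, show xbar + (b - z) - b = xbar - z by abel] at h
    linarith [hp (b - z)]
  refine ⟨a, ha, fun b hb => le_trans ?_ (sub_div_le_apply_sub_apply_of_le_apply_sub
    (p : X →ₗ[ℝ] ℝ) hlpos hl1 (hpB b₀ hb₀) (hpB b hb))⟩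
  rw [sub_le_sub_iff_left, div_le_div_iff₀ hlpos (by linarith)]
  nlinarith

end SupConvolution

theorem phiK_superdiff_mvi_general
    {X : Type*} [NormedAddCommGroup X] [NormedSpace ℝ X]
    (A B : Set X) (hA : Convex ℝ A) (hB : Convex ℝ B)
    (hAb : Bornology.IsBounded A)
    (hAne : A.Nonempty) (hBne : B.Nonempty)
    (r s : ℝ)
    (ψ : X → EReal)
    (hψ : {q : X × ℝ | (q.2 : EReal) ≤ ψ q.1} =
      convexHull ℝ ((A ×ˢ Iic r) ∪ (B ×ˢ Iic s)))
    (K : ℝ)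
    (φ : X → ℝ)
    (hφ : ∀ x, (φ x : EReal) = ⨆ y : X, ψ y - ((K * ‖x - y‖ : ℝ) : EReal))
    (xbar : X) (c : ℝ) (hc : 0 < c)
    (hUV : Disjoint
      {z ∈ convexHull ℝ (A ∪ B) | ((φ xbar - c : ℝ) : EReal) < ψ z - ((K * ‖z - xbar‖ : ℝ) : EReal)}
      {z ∈ convexHull ℝ (A ∪ B) | ((s - c : ℝ) : EReal) < ψ z ∧ ψ z < ((s + c : ℝ) : EReal)})
    (p : X →L[ℝ] ℝ)
    (hp : ∀ h : X, φ (xbar + h) - φ xbar ≤ p h) :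
    s - r ≤ sInf (p '' B) - sInf (p '' A) := by
  have hpA : BddBelow (p '' A) := (p.lipschitz.isBounded_image hAb).bddBelow
  have hδ : Tendsto (fun ε => ε * |s - r| / (c - ε)) (𝓝[>] 0) (𝓝 0) := by
    have : ContinuousAt (fun ε => ε * |s - r| / (c - ε)) 0 :=
      (continuousAt_id.mul continuousAt_const).div (continuousAt_const.sub continuousAt_id)
        (by simpa using hc.ne')
    simpa using this.tendsto.mono_left nhdsWithin_le_nhds
  refine le_of_tendsto (by simpa using tendsto_const_nhds.sub hδ) ?_
  filter_upwards [Ioo_mem_nhdsGT hc] with ε ⟨hε, hεc⟩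
  obtain ⟨a, ha, hab⟩ :=
    exists_mem_forall_sub_le_apply_sub_apply hA hB hAne hBne hψ hφ hUV hp hε hεc
  have hinfA := csInf_le hpA ⟨a, ha, rfl⟩
  have hinfB : p a + (s - r - ε * |s - r| / (c - ε)) ≤ sInf (p '' B) :=
    le_csInf (hBne.image p) (forall_mem_image.2 fun b hb => by linarith [hab b hb])
  linarith

/-- Proposition 3 (main part): if the sets `U` and `V` are disjoint and `p` is a
superdifferential of `φ_K` at `x̄`, then `inf_B p - inf_A p ≥ s - r`. -/
theorem phiK_superdiff_mvi
    {X : Type*} [NormedAddCommGroup X] [NormedSpace ℝ X] [CompleteSpace X]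
    (A B : Set X) (hA : Convex ℝ A) (hB : Convex ℝ B)
    (hAb : Bornology.IsBounded A) (hBb : Bornology.IsBounded B)
    (hAne : A.Nonempty) (hBne : B.Nonempty)
    (r s : ℝ) (hrs : r ≠ s)
    (ψ : X → EReal)
    (hψ : {q : X × ℝ | (q.2 : EReal) ≤ ψ q.1} =
      convexHull ℝ ((A ×ˢ Iic r) ∪ (B ×ˢ Iic s)))
    (K : ℝ) (hK : 0 < K)
    (φ : X → ℝ)
    (hφ : ∀ x, (φ x : EReal) = ⨆ y : X, ψ y - ((K * ‖x - y‖ : ℝ) : EReal))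
    (xbar : X) (c : ℝ) (hc : 0 < c)
    (hUV : Disjoint
      {z ∈ convexHull ℝ (A ∪ B) | ((φ xbar - c : ℝ) : EReal) < ψ z - ((K * ‖z - xbar‖ : ℝ) : EReal)}
      {z ∈ convexHull ℝ (A ∪ B) | ((s - c : ℝ) : EReal) < ψ z ∧ ψ z < ((s + c : ℝ) : EReal)})
    (p : X →L[ℝ] ℝ)
    (hp : ∀ h : X, φ (xbar + h) - φ xbar ≤ p h) :
    s - r ≤ sInf (p '' B) - sInf (p '' A) :=
  phiK_superdiff_mvi_general A B hA hB hAb hAne hBne r s ψ hψ K φ hφ xbar c hc hUV p hp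
end

section
/- Let A, B be convex and bounded subsets of a Banach space X, r ≠ s reals, and ψ the concave function with hypograph co{A×(−∞,r], B×(−∞,s]}. If (x_n) is a sequence with ψ(x_n) → s, then d(x_n, B) → 0, where d denotes the distance to the set B. -/
/-!
A point `(x, t)` of the hull splits as `x = (1 - θ) v + θ u`, `t ≤ (1 - θ) s + θ r` with `u ∈ A`,
`v ∈ B`, and the height `(1 - θ) s + θ r` is itself attained over `x`. When `ψ x` is within `δ` of
`s`, both heights pin `θ |r - s| ≤ δ`, while `d(x, B) ≤ ‖x - v‖ = θ ‖u - v‖ ≤ θ diam (A ∪ B)`.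
-/

open Set AffineMap Filter Metric Topology

section Hypograph

variable {E : Type*} [AddCommGroup E] [Module ℝ E] {A B : Set E} {r s : ℝ}

theorem exists_lineMap_of_mem_convexHull_union_prod_Iic (hA : Convex ℝ A) (hB : Convex ℝ B)
    (hA₀ : A.Nonempty) (hB₀ : B.Nonempty) {p : E × ℝ}
    (hp : p ∈ convexHull ℝ (A ×ˢ Iic r ∪ B ×ˢ Iic s)) :
    ∃ v ∈ B, ∃ u ∈ A, ∃ θ ∈ Icc (0 : ℝ) 1, p.1 = lineMap v u θ ∧ p.2 ≤ lineMap s r θ := by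
  rw [Convex.convexHull_union (hA.prod (convex_Iic r)) (hB.prod (convex_Iic s))
    (hA₀.prod nonempty_Iic) (hB₀.prod nonempty_Iic), mem_convexJoin] at hp
  obtain ⟨a, ⟨haA, har⟩, b, ⟨hbB, hbs⟩, hp⟩ := hp
  rw [segment_symm, segment_eq_image_lineMap] at hp
  obtain ⟨θ, hθ, rfl⟩ := hp
  exact ⟨b.1, hbB, a.1, haA, θ, hθ, fst_lineMap ..,
    (snd_lineMap ..).trans_le (lineMap_mono_endpoints hbs har hθ.1 hθ.2)⟩

theorem lineMap_mem_convexHull_union_prod_Iic {u v : E} (hu : u ∈ A) (hv : v ∈ B) {θ : ℝ}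
    (hθ : θ ∈ Icc (0 : ℝ) 1) :
    (lineMap v u θ, lineMap s r θ) ∈ convexHull ℝ (A ×ˢ Iic r ∪ B ×ˢ Iic s) := by
  have h := (convex_convexHull ℝ (A ×ˢ Iic r ∪ B ×ˢ Iic s)).lineMap_mem
    (subset_convexHull ℝ _ (mem_union_right _ (mk_mem_prod hv self_mem_Iic)))
    (subset_convexHull ℝ _ (mem_union_left _ (mk_mem_prod hu self_mem_Iic))) hθ
  convert h using 1
  exact (Prod.ext (fst_lineMap ..) (snd_lineMap ..)).symm

end Hypograph

theorem infDist_mul_abs_sub_le_of_mem_convexHull {X : Type*} [NormedAddCommGroup X]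
    [NormedSpace ℝ X] {A B : Set X} (hA : Convex ℝ A) (hB : Convex ℝ B)
    (hAb : Bornology.IsBounded A) (hBb : Bornology.IsBounded B) {r s δ : ℝ} {x : X}
    (hlow : (x, s - δ) ∈ convexHull ℝ (A ×ˢ Iic r ∪ B ×ˢ Iic s))
    (hup : ∀ t, (x, t) ∈ convexHull ℝ (A ×ˢ Iic r ∪ B ×ˢ Iic s) → t ≤ s + δ) :
    infDist x B * |r - s| ≤ diam (A ∪ B) * δ := by
  have hδ : 0 ≤ δ := by linarith [hup _ hlow]
  have hbound : 0 ≤ diam (A ∪ B) * δ := mul_nonneg diam_nonneg hδ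
  rcases B.eq_empty_or_nonempty with rfl | hB₀
  · rwa [infDist_empty, zero_mul]
  rcases A.eq_empty_or_nonempty with rfl | hA₀
  · rw [empty_prod, empty_union, (hB.prod (convex_Iic s)).convexHull_eq] at hlow
    rwa [infDist_zero_of_mem hlow.1, zero_mul]
  obtain ⟨v, hv, u, hu, θ, hθ, hx, ht⟩ :=
    exists_lineMap_of_mem_convexHull_union_prod_Iic hA hB hA₀ hB₀ hlow
  subst hx
  have hdist : infDist (lineMap v u θ) B ≤ θ * diam (A ∪ B) :=
    calc infDist (lineMap v u θ) B ≤ dist (lineMap v u θ) v := infDist_le_dist_of_mem hv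
      _ = θ * dist v u := by rw [dist_lineMap_left, Real.norm_of_nonneg hθ.1]
      _ ≤ θ * diam (A ∪ B) :=
        mul_le_mul_of_nonneg_left (dist_le_diam_of_mem (hAb.union hBb) (Or.inr hv) (Or.inl hu))
          hθ.1
  have hgap : θ * |r - s| ≤ δ := by
    have htop := hup _ (lineMap_mem_convexHull_union_prod_Iic hu hv hθ)
    rw [lineMap_apply_ring'] at htop ht
    rw [← abs_of_nonneg hθ.1, ← abs_mul, abs_le]
    constructor <;> linarith
  calc infDist (lineMap v u θ) B * |r - s| ≤ θ * diam (A ∪ B) * |r - s| := by gcongr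
    _ = diam (A ∪ B) * (θ * |r - s|) := by ring
    _ ≤ diam (A ∪ B) * δ := mul_le_mul_of_nonneg_left hgap diam_nonneg

theorem tendsto_nhds_zero_of_forall_eventually_le_mul {α : Type*} {l : Filter α} {f : α → ℝ}
    {K : ℝ} (hf : ∀ a, 0 ≤ f a) (h : ∀ δ > 0, ∀ᶠ a in l, f a ≤ K * δ) :
    Tendsto f l (𝓝 0) := by
  refine tendsto_order.2 ⟨fun a ha => .of_forall fun x => ha.trans_le (hf x), fun ε hε => ?_⟩
  have hKε : K * (ε / (|K| + 1)) < ε := by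
    rw [← mul_div_assoc, div_lt_iff₀ (by positivity)]
    nlinarith [le_abs_self K]
  filter_upwards [h (ε / (|K| + 1)) (by positivity)] with a ha
  exact ha.trans_lt hKε

theorem psi_tendsto_s_dist_B_general
    {X : Type*} [NormedAddCommGroup X] [NormedSpace ℝ X]
    (A B : Set X) (hA : Convex ℝ A) (hB : Convex ℝ B)
    (hAb : Bornology.IsBounded A) (hBb : Bornology.IsBounded B)
    (r s : ℝ) (hrs : r ≠ s)
    (ψ : X → EReal)
    (hψ : {q : X × ℝ | (q.2 : EReal) ≤ ψ q.1} =
      convexHull ℝ ((A ×ˢ Iic r) ∪ (B ×ˢ Iic s)))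
    (x : ℕ → X)
    (hx : Filter.Tendsto (fun n => ψ (x n)) Filter.atTop (nhds (s : EReal))) :
    Filter.Tendsto (fun n => Metric.infDist (x n) B) Filter.atTop (nhds 0) := by
  have hrs' : 0 < |r - s| := abs_pos.2 (sub_ne_zero.2 hrs)
  refine tendsto_nhds_zero_of_forall_eventually_le_mul (K := diam (A ∪ B) / |r - s|)
    (fun n => infDist_nonneg) fun δ hδ => ?_
  have hnear : ∀ᶠ n in atTop, ψ (x n) ∈ Ioo ((s - δ : ℝ) : EReal) (s + δ : ℝ) :=
    hx (Ioo_mem_nhds (by exact_mod_cast sub_lt_self s hδ)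
      (by exact_mod_cast lt_add_of_pos_right s hδ))
  filter_upwards [hnear] with n ⟨hlow, hup⟩
  rw [div_mul_eq_mul_div, le_div_iff₀ hrs']
  refine infDist_mul_abs_sub_le_of_mem_convexHull hA hB hAb hBb
    (by rw [← hψ]; exact hlow.le) fun t ht => ?_
  rw [← hψ] at ht
  exact EReal.coe_le_coe_iff.1 (ht.trans hup.le)

/-- Lemma: if `ψ(x_n) → s` then `d(x_n, B) → 0`. -/
theorem psi_tendsto_s_dist_B
    {X : Type*} [NormedAddCommGroup X] [NormedSpace ℝ X] [CompleteSpace X]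
    (A B : Set X) (hA : Convex ℝ A) (hB : Convex ℝ B)
    (hAb : Bornology.IsBounded A) (hBb : Bornology.IsBounded B)
    (r s : ℝ) (hrs : r ≠ s)
    (ψ : X → EReal)
    (hψ : {q : X × ℝ | (q.2 : EReal) ≤ ψ q.1} =
      convexHull ℝ ((A ×ˢ Iic r) ∪ (B ×ˢ Iic s)))
    (x : ℕ → X)
    (hx : Filter.Tendsto (fun n => ψ (x n)) Filter.atTop (nhds (s : EReal))) :
    Filter.Tendsto (fun n => Metric.infDist (x n) B) Filter.atTop (nhds 0) :=
  psi_tendsto_s_dist_B_general A B hA hB hAb hBb r s hrs ψ hψ x hx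
end

section
/- Let A, B be convex subsets of a Banach space X, r ≠ s reals, ψ with hypograph co{A×(−∞,r], B×(−∞,s]}, δ > 0, 0 < δ₁ < δ, μ ∈ ℝ with μ < min{r, s}, and set K = (max{r,s} − μ)/δ₁. Let φ_K be the sup-convolution of −K‖·‖ with ψ and let C be the closure of [A,B] + δB_X. Then φ_K(x) < μ for every x in the topological boundary of C. -/
/-!
Every point `(y, t)` of the hypograph of `ψ` lies in `[A,B] × (-∞, max{r,s}]`, so `ψ ≤ max{r,s}`
and `ψ = ⊥` off `[A,B]`. A boundary point `x` of `C` is not in the open `δ`-thickening of `[A,B]`,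
which lies inside `C`; hence `‖x - y‖ ≥ δ` wherever `ψ y ≠ ⊥`, and every term of the
sup-convolution is at most `max{r,s} - Kδ`. The choice of `K` makes this `< μ`.
-/

open Set Pointwise Metric

theorem convexHull_prod_Iic_union_subset {E : Type*} [AddCommGroup E] [Module ℝ E]
    (A B : Set E) (r s : ℝ) :
    convexHull ℝ ((A ×ˢ Iic r) ∪ (B ×ˢ Iic s)) ⊆ convexHull ℝ (A ∪ B) ×ˢ Iic (max r s) := by
  refine convexHull_min ?_ ((convex_convexHull ℝ _).prod (convex_Iic _))
  rintro ⟨y, t⟩ (⟨hy, ht⟩ | ⟨hy, ht⟩)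
  · exact ⟨subset_convexHull ℝ _ (Or.inl hy), ht.trans (le_max_left r s)⟩
  · exact ⟨subset_convexHull ℝ _ (Or.inr hy), ht.trans (le_max_right r s)⟩

section Hypograph

variable {α : Type*} {f : α → EReal} {S : Set α} {m : ℝ}

theorem le_of_hypograph_subset_prod_Iic (h : {q : α × ℝ | (q.2 : EReal) ≤ f q.1} ⊆ S ×ˢ Iic m)
    (y : α) : f y ≤ m := by
  by_contra! hlt
  obtain ⟨z, hmz, hzf⟩ := exists_between hlt
  lift z to ℝ using ⟨hzf.ne_top, hmz.ne_bot⟩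
  have hzm : z ≤ m := (h (show ((y, z).2 : EReal) ≤ f (y, z).1 from hzf.le)).2
  exact (EReal.coe_lt_coe_iff.mp hmz).not_ge hzm

theorem mem_of_hypograph_subset_prod_Iic (h : {q : α × ℝ | (q.2 : EReal) ≤ f q.1} ⊆ S ×ˢ Iic m)
    {y : α} (hy : f y ≠ ⊥) : y ∈ S := by
  obtain ⟨z, hz, hzf⟩ := exists_between (bot_lt_iff_ne_bot.mpr hy)
  lift z to ℝ using ⟨(hzf.trans_le (le_of_hypograph_subset_prod_Iic h y)).ne_top, hz.ne_bot⟩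
  exact (h (show ((y, z).2 : EReal) ≤ f (y, z).1 from hzf.le)).1

end Hypograph

section Frontier

variable {E : Type*} [NormedAddCommGroup E] [NormedSpace ℝ E]

theorem thickening_subset_interior_closure_add_smul_closedBall (S : Set E) {δ : ℝ} (hδ : 0 ≤ δ) :
    thickening δ S ⊆ interior (closure (S + δ • closedBall (0 : E) 1)) := by
  refine interior_maximal ?_ isOpen_thickening
  rw [← add_ball_zero, smul_unitClosedBall, Real.norm_of_nonneg hδ]
  exact (add_subset_add_left ball_subset_closedBall).trans subset_closure

theorem le_dist_of_mem_frontier_closure_add_smul_closedBall {S : Set E} {δ : ℝ} (hδ : 0 ≤ δ)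
    {x y : E} (hx : x ∈ frontier (closure (S + δ • closedBall (0 : E) 1))) (hy : y ∈ S) :
    δ ≤ dist x y := by
  by_contra! hxy
  exact hx.2 (thickening_subset_interior_closure_add_smul_closedBall S hδ
    (mem_thickening_iff.mpr ⟨y, hy, hxy⟩))

end Frontier

theorem iSup_sub_mul_norm_le {E : Type*} [SeminormedAddCommGroup E] {f : E → EReal} {x : E}
    {m K δ : ℝ} (hf : ∀ y, f y ≤ m) (hK : 0 ≤ K) (hfar : ∀ y, f y ≠ ⊥ → δ ≤ ‖x - y‖) :
    ⨆ y, f y - ((K * ‖x - y‖ : ℝ) : EReal) ≤ ((m - K * δ : ℝ) : EReal) := by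
  refine iSup_le fun y => ?_
  rcases eq_or_ne (f y) ⊥ with hbot | hy
  · simp [hbot]
  · have hKδ : ((K * δ : ℝ) : EReal) ≤ ((K * ‖x - y‖ : ℝ) : EReal) :=
      EReal.coe_le_coe_iff.mpr (mul_le_mul_of_nonneg_left (hfar y hy) hK)
    calc f y - ((K * ‖x - y‖ : ℝ) : EReal) ≤ (m : EReal) - ((K * δ : ℝ) : EReal) :=
          EReal.sub_le_sub (hf y) hKδ
      _ = ((m - K * δ : ℝ) : EReal) := rfl

theorem phiK_lt_mu_on_frontier_general
    {X : Type*} [NormedAddCommGroup X] [NormedSpace ℝ X]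
    (A B : Set X)
    (r s : ℝ)
    (ψ : X → EReal)
    (hψ : {q : X × ℝ | (q.2 : EReal) ≤ ψ q.1} =
      convexHull ℝ ((A ×ˢ Iic r) ∪ (B ×ˢ Iic s)))
    (δ δ₁ μ : ℝ) (hδ₁ : 0 < δ₁) (hδ₁δ : δ₁ < δ) (hμ : μ < min r s)
    (K : ℝ) (hK : K = (max r s - μ) / δ₁)
    (φ : X → ℝ)
    (hφ : ∀ x, (φ x : EReal) = ⨆ y : X, ψ y - ((K * ‖x - y‖ : ℝ) : EReal))
    (C : Set X)
    (hC : C = closure (convexHull ℝ (A ∪ B) + δ • Metric.closedBall (0 : X) 1)) :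
    ∀ x ∈ frontier C, φ x < μ := by
  intro x hx
  subst hC
  have hhyp := hψ.trans_subset (convexHull_prod_Iic_union_subset A B r s)
  have hKpos : 0 < K := hK ▸ div_pos (by linarith [min_le_max (a := r) (b := s)]) hδ₁
  have hfar : ∀ y, ψ y ≠ ⊥ → δ ≤ ‖x - y‖ := fun y hy =>
    dist_eq_norm x y ▸ le_dist_of_mem_frontier_closure_add_smul_closedBall (hδ₁.trans hδ₁δ).le hx
      (mem_of_hypograph_subset_prod_Iic hhyp hy)
  have hle : φ x ≤ max r s - K * δ := EReal.coe_le_coe_iff.mp <|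
    hφ x ▸ iSup_sub_mul_norm_le (le_of_hypograph_subset_prod_Iic hhyp) hKpos.le hfar
  have hKδ₁ : K * δ₁ = max r s - μ := by rw [hK]; field_simp
  linarith [mul_lt_mul_of_pos_left hδ₁δ hKpos]

/-- On the boundary of `C = closure([A,B] + δ B_X)` one has `φ_K < μ`, where
`K = (max{r,s} − μ)/δ₁` with `0 < δ₁ < δ` and `μ < min{r,s}`. -/
theorem phiK_lt_mu_on_frontier
    {X : Type*} [NormedAddCommGroup X] [NormedSpace ℝ X] [CompleteSpace X]
    (A B : Set X) (hA : Convex ℝ A) (hB : Convex ℝ B)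
    (r s : ℝ) (hrs : r ≠ s)
    (ψ : X → EReal)
    (hψ : {q : X × ℝ | (q.2 : EReal) ≤ ψ q.1} =
      convexHull ℝ ((A ×ˢ Iic r) ∪ (B ×ˢ Iic s)))
    (δ δ₁ μ : ℝ) (hδ₁ : 0 < δ₁) (hδ₁δ : δ₁ < δ) (hμ : μ < min r s)
    (K : ℝ) (hK : K = (max r s - μ) / δ₁)
    (φ : X → ℝ)
    (hφ : ∀ x, (φ x : EReal) = ⨆ y : X, ψ y - ((K * ‖x - y‖ : ℝ) : EReal))
    (C : Set X)
    (hC : C = closure (convexHull ℝ (A ∪ B) + δ • Metric.closedBall (0 : X) 1)) :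
    ∀ x ∈ frontier C, φ x < μ :=
  phiK_lt_mu_on_frontier_general A B r s ψ hψ δ δ₁ μ hδ₁ hδ₁δ hμ K hK φ hφ C hC
end
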